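/- Let A be the system matrix with n_E = 0 (as described), with c_I, c, β, p, v_a, T positive, and let λ be a nonzero real eigenvalue of A with λ ≠ -c_I. Then the eigenspace of A for λ is one-dimensional, spanned by the vector (βT/(c_I+λ), c_I βT/(c_I+λ)², ..., c_I^{n_I-1} βT/(c_I+λ)^{n_I}, 1, 0). -/
import Mathlib


/-- The system matrix `A` for `n_E = 0` (0-based indices). -/
def Amat (cI c β T p va : ℝ) (nI : ℕ) : Matrix (Fin (nI + 2)) (Fin (nI + 2)) ℝ :=
  Matrix.of fun i j =>
    if i.val = nI + 1 then 0
    else if i.val = nI then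
      (if j.val < nI then p else if j.val = nI then -c else va)
    else
      if j.val = i.val then -cI
      else if i.val = j.val + 1 then cI
      else if i.val = 0 ∧ j.val = nI then β * T
      else 0

/-- The claimed eigenvector `(βT/(c_I+λ), c_I βT/(c_I+λ)², …,
`c_I^{n_I-1} βT/(c_I+λ)^{n_I}`, 1, 0)`. -/
noncomputable def eigVec (cI β T lam : ℝ) (nI : ℕ) : Fin (nI + 2) → ℝ :=
  fun i =>
    if i.val < nI then cI ^ i.val * (β * T) / (cI + lam) ^ (i.val + 1)
    else if i.val = nI then 1
    else 0

private lemma sum_two {m : ℕ} (f : Fin m → ℝ) (a b : Fin m) (hab : a ≠ b)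
    (h : ∀ j, j ≠ a → j ≠ b → f j = 0) : ∑ j, f j = f a + f b := by
  rw [← Finset.sum_pair hab]
  refine (Finset.sum_subset (Finset.subset_univ _) ?_).symm
  intro j _ hj
  simp only [Finset.mem_insert, Finset.mem_singleton, not_or] at hj
  exact h j hj.1 hj.2

private lemma rowLast (cI c β T p va : ℝ) (nI : ℕ) (v : Fin (nI + 2) → ℝ)
    (i : Fin (nI + 2)) (hi : i.val = nI + 1) :
    (Amat cI c β T p va nI).mulVec v i = 0 := by
  simp only [Matrix.mulVec, dotProduct, Amat, Matrix.of_apply, hi]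
  simp

private lemma row0 (cI c β T p va : ℝ) (nI : ℕ) (hnI : 1 ≤ nI) (v : Fin (nI + 2) → ℝ)
    (i iN : Fin (nI + 2)) (hi : i.val = 0) (hN : iN.val = nI) :
    (Amat cI c β T p va nI).mulVec v i = -cI * v i + β * T * v iN := by
  have hne : i ≠ iN := by intro h; rw [h] at hi; omega
  simp only [Matrix.mulVec, dotProduct]
  rw [sum_two _ i iN hne]
  · have e1 : Amat cI c β T p va nI i i = -cI := by
      simp only [Amat, Matrix.of_apply]
      split_ifs <;> first | rfl | (exfalso; omega)
    have e2 : Amat cI c β T p va nI i iN = β * T := by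
      simp only [Amat, Matrix.of_apply]
      split_ifs <;> first | rfl | (exfalso; omega)
    rw [e1, e2]
  · intro j hja hjb
    have h1 : j.val ≠ i.val := fun h => hja (Fin.ext h)
    have h2 : j.val ≠ iN.val := fun h => hjb (Fin.ext h)
    have : Amat cI c β T p va nI i j = 0 := by
      simp only [Amat, Matrix.of_apply]
      split_ifs <;> first | rfl | (exfalso; omega)
    rw [this, zero_mul]

private lemma rowMid (cI c β T p va : ℝ) (nI : ℕ) (v : Fin (nI + 2) → ℝ)
    (i i' : Fin (nI + 2)) (h1 : 1 ≤ i.val) (h2 : i.val < nI) (hi' : i'.val + 1 = i.val) :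
    (Amat cI c β T p va nI).mulVec v i = cI * v i' + -cI * v i := by
  have hne : i' ≠ i := by intro h; rw [h] at hi'; omega
  simp only [Matrix.mulVec, dotProduct]
  rw [sum_two _ i' i hne]
  · have e1 : Amat cI c β T p va nI i i' = cI := by
      simp only [Amat, Matrix.of_apply]
      split_ifs <;> first | rfl | (exfalso; omega)
    have e2 : Amat cI c β T p va nI i i = -cI := by
      simp only [Amat, Matrix.of_apply]
      split_ifs <;> first | rfl | (exfalso; omega)
    rw [e1, e2]
  · intro j hja hjb
    have g1 : j.val ≠ i'.val := fun h => hja (Fin.ext h)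
    have g2 : j.val ≠ i.val := fun h => hjb (Fin.ext h)
    have : Amat cI c β T p va nI i j = 0 := by
      simp only [Amat, Matrix.of_apply]
      split_ifs <;> first | rfl | (exfalso; omega)
    rw [this, zero_mul]

private lemma rowN (cI c β T p va : ℝ) (nI : ℕ) (v : Fin (nI + 2) → ℝ)
    (iN iL : Fin (nI + 2)) (hN : iN.val = nI) (hL : iL.val = nI + 1) :
    (Amat cI c β T p va nI).mulVec v iN =
      p * (∑ j, if j.val < nI then v j else 0) + -c * v iN + va * v iL := by
  simp only [Matrix.mulVec, dotProduct]
  have hpt : ∀ j : Fin (nI + 2), Amat cI c β T p va nI iN j * v j =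
      p * (if j.val < nI then v j else 0) +
        ((if j = iN then -c * v j else 0) + (if j = iL then va * v j else 0)) := by
    intro j
    have hAr : Amat cI c β T p va nI iN j =
        (if j.val < nI then p else if j.val = nI then -c else va) := by
      simp only [Amat, Matrix.of_apply]
      split_ifs <;> first | rfl | (exfalso; omega)
    rw [hAr]
    by_cases c1 : j.val < nI
    · rw [if_pos c1, if_pos c1, if_neg (by intro h; rw [h] at c1; omega),
        if_neg (by intro h; rw [h] at c1; omega)]
      ring
    · rw [if_neg c1, if_neg c1]
      by_cases c2 : j.val = nI
      · rw [if_pos c2, if_pos (Fin.ext (by omega)), if_neg (by intro h; rw [h] at c2; omega)]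
        ring
      · have c3 : j.val = nI + 1 := by omega
        rw [if_neg c2, if_neg (by intro h; rw [h] at c3; omega), if_pos (Fin.ext (by omega))]
        ring
  rw [Finset.sum_congr rfl fun j _ => hpt j, Finset.sum_add_distrib, Finset.sum_add_distrib,
    ← Finset.mul_sum, Finset.sum_ite_eq' Finset.univ, Finset.sum_ite_eq' Finset.univ]
  simp [add_assoc]

private lemma struct (cI c β T p va lam : ℝ) (nI : ℕ) (hnI : 1 ≤ nI)
    (hlam0 : lam ≠ 0) (hden : cI + lam ≠ 0) (v : Fin (nI + 2) → ℝ)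
    (h : (Amat cI c β T p va nI).mulVec v = lam • v) :
    v ⟨nI + 1, by omega⟩ = 0 ∧
      (∀ j : Fin (nI + 2), j.val < nI →
        v j = eigVec cI β T lam nI j * v ⟨nI, by omega⟩) := by
  have hL := congrFun h ⟨nI + 1, by omega⟩
  rw [rowLast cI c β T p va nI v _ rfl] at hL
  simp only [Pi.smul_apply, smul_eq_mul] at hL
  have hvL : v ⟨nI + 1, by omega⟩ = 0 := by
    rcases mul_eq_zero.mp hL.symm with h' | h'
    · exact absurd h' hlam0
    · exact h'
  refine ⟨hvL, ?_⟩
  have key : ∀ k, ∀ hk : k < nI,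
      v ⟨k, by omega⟩ = cI ^ k * (β * T) / (cI + lam) ^ (k + 1) * v ⟨nI, by omega⟩ := by
    intro k
    induction k with
    | zero =>
      intro _
      have h0 := congrFun h ⟨0, by omega⟩
      rw [row0 cI c β T p va nI hnI v ⟨0, by omega⟩ ⟨nI, by omega⟩ rfl rfl] at h0
      simp only [Pi.smul_apply, smul_eq_mul] at h0
      have step : v ⟨0, by omega⟩ = β * T * v ⟨nI, by omega⟩ / (cI + lam) := by
        rw [eq_div_iff hden]
        linarith
      rw [step]
      ring
    | succ k ih =>
      intro hk1
      have hk : k < nI := by omega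
      have hmid := congrFun h ⟨k + 1, by omega⟩
      rw [rowMid cI c β T p va nI v ⟨k + 1, by omega⟩ ⟨k, by omega⟩
        (by show 1 ≤ k + 1; omega) (by show k + 1 < nI; omega) rfl] at hmid
      simp only [Pi.smul_apply, smul_eq_mul] at hmid
      have step : v ⟨k + 1, by omega⟩ = cI * v ⟨k, by omega⟩ / (cI + lam) := by
        rw [eq_div_iff hden]
        linarith
      rw [step, ih hk]
      field_simp
      ring
  intro j hj
  have := key j.val hj
  simp only [eigVec]
  rw [if_pos hj]
  exact this

theorem stmt_15 (cI c β T p va : ℝ) (hcI : 0 < cI) (hc : 0 < c) (hβ : 0 < β)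
    (hp : 0 < p) (hva : 0 < va) (hT : 0 < T) (nI : ℕ) (hnI : 1 ≤ nI) (lam : ℝ)
    (hlam0 : lam ≠ 0) (hlamcI : lam ≠ -cI)
    (heig : ∃ v : Fin (nI + 2) → ℝ, v ≠ 0 ∧ (Amat cI c β T p va nI).mulVec v = lam • v) :
    ∀ v : Fin (nI + 2) → ℝ,
      (Amat cI c β T p va nI).mulVec v = lam • v ↔
        ∃ t : ℝ, v = t • eigVec cI β T lam nI := by
  have hden : cI + lam ≠ 0 := by
    intro h'; exact hlamcI (by linarith)
  set e := eigVec cI β T lam nI with he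
  have heN : e ⟨nI, by omega⟩ = 1 := by
    simp only [he, eigVec]
    rw [if_neg (by omega)]
    simp
  have heL : e ⟨nI + 1, by omega⟩ = 0 := by
    simp only [he, eigVec]
    rw [if_neg (by omega), if_neg (by omega)]
  -- the characteristic constraint, derived from the existence of some eigenvector
  set S : ℝ := ∑ j : Fin (nI + 2), if j.val < nI then e j else 0 with hS
  have hC : p * S - c = lam := by
    obtain ⟨w, hw0, hw⟩ := heig
    obtain ⟨hwL, hwkey⟩ := struct cI c β T p va lam nI hnI hlam0 hden w hw
    have hwN : w ⟨nI, by omega⟩ ≠ 0 := by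
      intro h0
      apply hw0
      funext i
      rcases lt_trichotomy i.val nI with hi | hi | hi
      · rw [hwkey i hi, h0, mul_zero]; rfl
      · have : i = ⟨nI, by omega⟩ := Fin.ext hi
        rw [this, h0]; rfl
      · have : i = ⟨nI + 1, by omega⟩ := Fin.ext (by show ↑i = nI + 1; omega)
        rw [this, hwL]; rfl
    have hN := congrFun hw ⟨nI, by omega⟩
    rw [rowN cI c β T p va nI w ⟨nI, by omega⟩ ⟨nI + 1, by omega⟩ rfl rfl] at hN
    simp only [Pi.smul_apply, smul_eq_mul] at hN
    have hsum : (∑ j : Fin (nI + 2), if j.val < nI then w j else 0)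
        = S * w ⟨nI, by omega⟩ := by
      rw [hS, Finset.sum_mul]
      refine Finset.sum_congr rfl fun j _ => ?_
      by_cases hj : j.val < nI
      · rw [if_pos hj, if_pos hj, hwkey j hj]
      · rw [if_neg hj, if_neg hj, zero_mul]
    rw [hsum, hwL] at hN
    have h1 : (p * S - c - lam) * w ⟨nI, by omega⟩ = 0 := by linear_combination hN
    rcases mul_eq_zero.mp h1 with h' | h'
    · linarith
    · exact absurd h' hwN
  -- A e = lam • e
  have hAe : (Amat cI c β T p va nI).mulVec e = lam • e := by
    funext i
    simp only [Pi.smul_apply, smul_eq_mul]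
    rcases lt_trichotomy i.val nI with hi | hi | hi
    · rcases Nat.eq_zero_or_pos i.val with hi0 | hi0
      · rw [row0 cI c β T p va nI hnI e i ⟨nI, by omega⟩ hi0 rfl, heN]
        have hei : e i = cI ^ i.val * (β * T) / (cI + lam) ^ (i.val + 1) := by
          simp only [he, eigVec]; rw [if_pos hi]
        rw [hei, hi0]
        field_simp
        ring
      · obtain ⟨k, hk⟩ : ∃ k, i.val = k + 1 := ⟨i.val - 1, by omega⟩
        rw [rowMid cI c β T p va nI e i ⟨k, by omega⟩ hi0 hi (by show k + 1 = ↑i; omega)]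
        have hei : e i = cI ^ (k + 1) * (β * T) / (cI + lam) ^ (k + 2) := by
          simp only [he, eigVec]; rw [if_pos hi, hk]
        have hei' : e ⟨k, by omega⟩ = cI ^ k * (β * T) / (cI + lam) ^ (k + 1) := by
          simp only [he, eigVec]; rw [if_pos (by show k < nI; omega)]
        rw [hei, hei']
        field_simp
        ring
    · rw [rowN cI c β T p va nI e i ⟨nI + 1, by omega⟩ hi rfl, heL]
      have hei : e i = 1 := by
        simp only [he, eigVec]; rw [if_neg (by omega), if_pos hi]
      rw [hei, ← hS]
      linarith [hC]
    · have hi' : i.val = nI + 1 := by omega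
      rw [rowLast cI c β T p va nI e i hi']
      have hei : e i = 0 := by
        simp only [he, eigVec]; rw [if_neg (by omega), if_neg (by omega)]
      rw [hei, mul_zero]
  intro v
  constructor
  · intro hv
    obtain ⟨hvL, hvkey⟩ := struct cI c β T p va lam nI hnI hlam0 hden v hv
    refine ⟨v ⟨nI, by omega⟩, funext fun i => ?_⟩
    simp only [Pi.smul_apply, smul_eq_mul]
    rcases lt_trichotomy i.val nI with hi | hi | hi
    · rw [hvkey i hi, mul_comm]
    · have : i = ⟨nI, by omega⟩ := Fin.ext hi
      rw [this, heN, mul_one]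
    · have : i = ⟨nI + 1, by omega⟩ := Fin.ext (by show ↑i = nI + 1; omega)
      rw [this, hvL, heL, mul_zero]
  · rintro ⟨t, rfl⟩
    rw [Matrix.mulVec_smul, hAe, smul_comm]
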